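/- arXiv:1502.04513 — 5 statements merged into one kernel-verified Lean document; each statement's English description precedes it below -/
import Mathlib

section
/- Let G be a second countable locally compact group with Haar measure μ, and let (V₀, V₁) be a pair of disjoint open subsets of G such that there is a maximal n for which one can find g₀,…,g_{n-1} ∈ G and points (x_η : η ∈ {0,1}^n) in G with g_k · x_η ∈ V_{η(k)} for all k < n and all η (a 'tame pair'). Then μ(cl(V₀) ∩ cl(V₁)) = 0. -/
/-!
If `F = closure V₀ ∩ closure V₁` had positive Haar measure, one could shatter `(V₀, V₁)` at every
level. Inductively choose `g₀, …, g_{n-1}` such that `1` lies in the closure of each of the `2ⁿ`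
open cells `{y | ∀ k, g k * y ∈ V_{η k}}`. To pass to `n + 1`, pick `f ∈ F` avoiding countably many
null sets: by Steinhaus' theorem, for an open `P` with `1 ∈ closure P`, almost no `f ∈ closure W`
has `f • P` disjoint from `W`. Applied to `P = cell ∩ b`, with `b` running through a countable
basis at `1`, this keeps `1` in the closure of both halves of each cell when `gₙ = f`.
-/

open MeasureTheory Set Pointwise Topology TopologicalSpace

def IsShatteredAt {G ι : Type*} [Mul G] (W : ι → Set G) (n : ℕ) : Prop :=
  ∃ (g : Fin n → G) (x : (Fin n → ι) → G), ∀ (k : Fin n) (η : Fin n → ι), g k * x η ∈ W (η k)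

theorem isClosed_setOf_disjoint_smul {G : Type*} [Group G] [TopologicalSpace G]
    [IsTopologicalGroup G] {P W : Set G} (hW : IsOpen W) :
    IsClosed {f : G | Disjoint (f • P) W} := by
  have : {f : G | Disjoint (f • P) W} = ⋂ p ∈ P, (· * p) ⁻¹' Wᶜ := by
    ext f
    simp [Set.disjoint_left, Set.mem_smul_set]
  rw [this]
  exact isClosed_biInter fun p _ => hW.isClosed_compl.preimage (continuous_mul_const p)

section

variable {G : Type*} [Group G] [TopologicalSpace G] [IsTopologicalGroup G] [LocallyCompactSpace G]
  [SecondCountableTopology G] [MeasurableSpace G] [BorelSpace G] (μ : Measure G) [μ.IsHaarMeasure]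

theorem inv_mul_mem_nhds_one_of_haar_pos {E : Set G} (hE : MeasurableSet E) (hEpos : 0 < μ E) :
    E⁻¹ * E ∈ 𝓝 (1 : G) := by
  have hE' : 0 < μ E⁻¹ := pos_iff_ne_zero.2 fun h => hEpos.ne' ((measure_inv_null μ).1 h)
  simpa only [div_eq_mul_inv, inv_inv] using
    Measure.div_mem_nhds_one_of_haar_pos μ E⁻¹ hE.inv hE'

theorem measure_setOf_disjoint_smul_eq_zero {P W : Set G} (hP : IsOpen P)
    (hP1 : (1 : G) ∈ closure P) (hW : IsOpen W) :
    μ {f ∈ closure W | Disjoint (f • P) W} = 0 := by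
  set B := {f ∈ closure W | Disjoint (f • P) W}
  have hB : MeasurableSet B :=
    (isClosed_closure.inter (isClosed_setOf_disjoint_smul hW)).measurableSet
  by_contra hB0
  obtain ⟨p, ⟨a, ha, b, hb, rfl⟩, hp⟩ :=
    mem_closure_iff_nhds.1 hP1 _ (inv_mul_mem_nhds_one_of_haar_pos μ hB (pos_iff_ne_zero.2 hB0))
  have hb_mem : b ∈ a⁻¹ • P := ⟨a * b, hp, by simp [smul_eq_mul]⟩
  obtain ⟨y, hyP, hyW⟩ := mem_closure_iff.1 hb.1 _ (hP.smul a⁻¹) hb_mem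
  exact Set.disjoint_left.1 ha.2 hyP hyW

variable {ι : Type*} [Countable ι] {W : ι → Set G}

theorem exists_forall_one_mem_closure_inter_preimage_mul (hW : ∀ i, IsOpen (W i))
    (hμ : μ (⋂ i, closure (W i)) ≠ 0) {J : Type*} [Countable J] {C : J → Set G}
    (hC : ∀ j, IsOpen (C j)) (hC1 : ∀ j, (1 : G) ∈ closure (C j)) :
    ∃ f : G, ∀ j i, (1 : G) ∈ closure (C j ∩ (f * ·) ⁻¹' W i) := by
  set U := ⋃ (j) (i) (b : countableBasis G) (_ : (1 : G) ∈ (b : Set G)),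
    {f ∈ closure (W i) | Disjoint (f • ((b : Set G) ∩ C j)) (W i)}
  have hU : μ U = 0 := by
    refine measure_iUnion_null fun j => measure_iUnion_null fun i =>
      measure_iUnion_null fun b => measure_iUnion_null fun hb => ?_
    have hbo : IsOpen (b : Set G) := (isBasis_countableBasis G).isOpen b.2
    exact measure_setOf_disjoint_smul_eq_zero μ (hbo.inter (hC j))
      (hbo.inter_closure ⟨hb, hC1 j⟩) (hW i)
  obtain ⟨f, hfW, hfU⟩ := nonempty_of_measure_ne_zero (by rwa [measure_sdiff_null hU])
  refine ⟨f, fun j i => (isBasis_countableBasis G).mem_closure_iff.2 fun b hb h1b => ?_⟩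
  have hmeet : ¬Disjoint (f • (b ∩ C j)) (W i) := fun h =>
    hfU (mem_iUnion_of_mem j <| mem_iUnion_of_mem i <| mem_iUnion_of_mem ⟨b, hb⟩ <|
      mem_iUnion_of_mem h1b ⟨mem_iInter.1 hfW i, h⟩)
  obtain ⟨_, ⟨y, ⟨hyb, hyC⟩, rfl⟩, hyW⟩ := Set.not_disjoint_iff.1 hmeet
  exact ⟨y, hyb, hyC, hyW⟩

theorem exists_forall_one_mem_closure_iInter_preimage_mul (hW : ∀ i, IsOpen (W i))
    (hμ : μ (⋂ i, closure (W i)) ≠ 0) (n : ℕ) :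
    ∃ g : Fin n → G, ∀ η : Fin n → ι, (1 : G) ∈ closure (⋂ k, (g k * ·) ⁻¹' W (η k)) := by
  induction n with
  | zero => exact ⟨Fin.elim0, fun η => by simp⟩
  | succ n ih =>
    obtain ⟨g, hg⟩ := ih
    have hcell : ∀ η : Fin n → ι, IsOpen (⋂ k, (g k * ·) ⁻¹' W (η k)) := fun η =>
      isOpen_iInter_of_finite fun k => (hW (η k)).preimage (continuous_const_mul (g k))
    obtain ⟨f, hf⟩ := exists_forall_one_mem_closure_inter_preimage_mul μ hW hμ hcell hg
    refine ⟨Fin.snoc g f, fun η => ?_⟩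
    convert hf (Fin.init η) (η (Fin.last n)) using 2
    ext y
    simp [Fin.forall_fin_succ', Fin.init]

theorem isShatteredAt_of_measure_iInter_closure_ne_zero (hW : ∀ i, IsOpen (W i))
    (hμ : μ (⋂ i, closure (W i)) ≠ 0) (n : ℕ) : IsShatteredAt W n := by
  obtain ⟨g, hg⟩ := exists_forall_one_mem_closure_iInter_preimage_mul μ hW hμ n
  choose x hx using fun η => closure_nonempty_iff.1 ⟨1, hg η⟩
  exact ⟨g, x, fun k η => mem_iInter.1 (hx η) k⟩

end

theorem tame_pair_closure_inter_null_general
    {G : Type*} [Group G] [TopologicalSpace G] [IsTopologicalGroup G]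
    [LocallyCompactSpace G] [SecondCountableTopology G]
    [MeasurableSpace G] [BorelSpace G]
    (μ : Measure G) [μ.IsHaarMeasure]
    (V₀ V₁ : Set G) (hV₀ : IsOpen V₀) (hV₁ : IsOpen V₁)
    (htame : ∃ N : ℕ, ∀ (n : ℕ) (g : Fin n → G) (x : (Fin n → Fin 2) → G),
      (∀ (k : Fin n) (η : Fin n → Fin 2),
        g k * x η ∈ (if η k = 0 then V₀ else V₁)) → n ≤ N) :
    μ (closure V₀ ∩ closure V₁) = 0 := by
  obtain ⟨N, hN⟩ := htame
  set W : Fin 2 → Set G := fun i => if i = 0 then V₀ else V₁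
  have hW : ∀ i, IsOpen (W i) := Fin.forall_fin_two.2 ⟨hV₀, hV₁⟩
  have hWcl : ⋂ i, closure (W i) = closure V₀ ∩ closure V₁ := by
    ext; simp [W, Fin.forall_fin_two]
  by_contra hμ
  obtain ⟨g, x, hgx⟩ :=
    isShatteredAt_of_measure_iInter_closure_ne_zero μ hW (hWcl ▸ hμ) (N + 1)
  exact (hN (N + 1) g x hgx).not_gt N.lt_succ_self

/-- For a tame pair `(V₀, V₁)` of disjoint open sets in a second countable
locally compact group with Haar measure `μ`, the set `closure V₀ ∩ closure V₁` is `μ`-null. -/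
theorem tame_pair_closure_inter_null
    {G : Type*} [Group G] [TopologicalSpace G] [IsTopologicalGroup G] [T2Space G]
    [LocallyCompactSpace G] [SecondCountableTopology G]
    [MeasurableSpace G] [BorelSpace G]
    (μ : Measure G) [μ.IsHaarMeasure]
    (V₀ V₁ : Set G) (hV₀ : IsOpen V₀) (hV₁ : IsOpen V₁) (hdisj : Disjoint V₀ V₁)
    (htame : ∃ N : ℕ, ∀ (n : ℕ) (g : Fin n → G) (x : (Fin n → Fin 2) → G),
      (∀ (k : Fin n) (η : Fin n → Fin 2),
        g k * x η ∈ (if η k = 0 then V₀ else V₁)) → n ≤ N) :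
    μ (closure V₀ ∩ closure V₁) = 0 :=
  tame_pair_closure_inter_null_general μ V₀ V₁ hV₀ hV₁ htame
end

section
/- Let G be a set and 𝓕 a family of subsets of G. Then 𝓕 has finite VC-dimension if and only if 𝓕 has finite dual VC-dimension, where the dual VC-dimension is the supremum of integers n such that there exist X₁,…,Xₙ ∈ 𝓕 for which all 2ⁿ cells of the Venn diagram ⋂_{i∈I} Xᵢ ∩ ⋂_{i∉I} Xᵢᶜ (I ⊆ {1,…,n}) are non-empty. -/
/-! Both VC-dimensions are instances of one notion: a relation `r : α → β → Prop` shatters a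
family `a : ι → α` if every `T ⊆ ι` is cut out as `{i | r (a i) b}` by some `b`; the primal
dimension uses `x ∈ F`, the dual one its flip. If `r` shatters a family indexed by the subsets of
`ι`, the points `b i` cutting out `{S | i ∈ S}` form a family indexed by `ι` shattered by the
flipped relation, so a bound `n` on one side gives the bound `2 ^ (n + 1)` on the other. -/

open Set

def Shatters {G : Type*} (𝓕 : Set (Set G)) (A : Finset G) : Prop :=
  ∀ B ⊆ A, ∃ S ∈ 𝓕, S ∩ (A : Set G) = (B : Set G)

open Function

def RelShatters {α β ι : Type*} (r : α → β → Prop) (a : ι → α) : Prop :=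
  ∀ T : Set ι, ∃ b, ∀ i, r (a i) b ↔ i ∈ T

namespace RelShatters

variable {α β ι κ : Type*} {r : α → β → Prop}

theorem injective {a : ι → α} (h : RelShatters r a) : Injective a := by
  intro i j hij
  obtain ⟨b, hb⟩ := h {i}
  exact ((hb j).1 (hij ▸ (hb i).2 rfl)).symm

theorem comp {a : ι → α} (h : RelShatters r a) {f : κ → ι} (hf : Injective f) :
    RelShatters r (a ∘ f) := fun T => by
  obtain ⟨b, hb⟩ := h (f '' T)
  exact ⟨b, fun i => (hb (f i)).trans hf.mem_set_image⟩

theorem exists_flip {a : Set ι → α} (h : RelShatters r a) :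
    ∃ b : ι → β, RelShatters (flip r) b := by
  choose b hb using fun i => h {S | i ∈ S}
  exact ⟨b, fun U => ⟨a U, fun i => hb i U⟩⟩

end RelShatters

theorem lt_two_pow_of_relShatters {α β : Type*} {r : α → β → Prop} {n : ℕ}
    (hn : ∀ k (b : Fin k → β), RelShatters (flip r) b → k ≤ n)
    {k : ℕ} {a : Fin k → α} (ha : RelShatters r a) : k < 2 ^ (n + 1) := by
  by_contra! hk
  obtain ⟨e⟩ : Nonempty (Set (Fin (n + 1)) ↪ Fin k) :=
    Embedding.nonempty_of_card_le (by simpa using hk)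
  obtain ⟨b, hb⟩ := (ha.comp e.injective).exists_flip
  have := hn _ b hb
  omega

theorem exists_bound_relShatters_iff_flip {α β : Type*} (r : α → β → Prop) :
    (∃ n, ∀ k (a : Fin k → α), RelShatters r a → k ≤ n) ↔
      ∃ n, ∀ k (b : Fin k → β), RelShatters (flip r) b → k ≤ n :=
  ⟨fun ⟨n, hn⟩ => ⟨2 ^ (n + 1), fun _ _ hb => (lt_two_pow_of_relShatters hn hb).le⟩,
    fun ⟨n, hn⟩ => ⟨2 ^ (n + 1), fun _ _ ha => (lt_two_pow_of_relShatters hn ha).le⟩⟩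

section Membership

variable {G ι : Type*} {𝓕 : Set (Set G)}

theorem Shatters.relShatters {A : Finset G} (h : Shatters 𝓕 A) {a : ι → G}
    (ha : Injective a) (haA : ∀ i, a i ∈ A) :
    RelShatters (fun x (F : 𝓕) => x ∈ (F : Set G)) a := by
  classical
  intro T
  obtain ⟨S, hS, hSA⟩ := h (A.filter (· ∈ a '' T)) (Finset.filter_subset _ _)
  refine ⟨⟨S, hS⟩, fun i => ?_⟩
  have hi : a i ∈ S ∩ (A : Set G) ↔ a i ∈ ((A.filter (· ∈ a '' T) : Finset G) : Set G) := by
    rw [hSA]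
  simpa only [Finset.coe_filter, Set.mem_inter_iff, Finset.mem_coe, Set.mem_ofPred_eq, haA i,
    and_true, true_and, ha.mem_set_image] using hi

theorem shatters_image_of_relShatters [DecidableEq G] {a : ι → G}
    (h : RelShatters (fun x (F : 𝓕) => x ∈ (F : Set G)) a) (s : Finset ι) :
    Shatters 𝓕 (s.image a) := by
  intro B hB
  obtain ⟨⟨S, hS⟩, hb⟩ := h (a ⁻¹' B)
  refine ⟨S, hS, Set.ext fun x => ?_⟩
  simp only [Set.mem_inter_iff, Finset.coe_image, Set.mem_image, Finset.mem_coe]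
  constructor
  · rintro ⟨hxS, i, -, rfl⟩
    exact (hb i).1 hxS
  · intro hx
    obtain ⟨i, hi, rfl⟩ := Finset.mem_image.1 (hB hx)
    exact ⟨(hb i).2 hx, i, hi, rfl⟩

theorem forall_shatters_card_le_iff (n : ℕ) :
    (∀ A : Finset G, Shatters 𝓕 A → A.card ≤ n) ↔
      ∀ k (a : Fin k → G), RelShatters (fun x (F : 𝓕) => x ∈ (F : Set G)) a → k ≤ n := by
  classical
  constructor
  · intro hn k a ha
    simpa [Finset.card_image_of_injective _ ha.injective] using
      hn _ (shatters_image_of_relShatters ha Finset.univ)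
  · intro hn A hA
    simpa using hn _ _ (hA.relShatters (Subtype.val_injective.comp A.equivFin.symm.injective)
      fun i => (A.equivFin.symm i).2)

theorem forall_venn_cells_nonempty_le_iff (n : ℕ) :
    (∀ (m : ℕ) (X : Fin m → Set G), (∀ i, X i ∈ 𝓕) →
        (∀ I : Set (Fin m), ∃ x : G, ∀ i, x ∈ X i ↔ i ∈ I) → m ≤ n) ↔
      ∀ k (X : Fin k → 𝓕), RelShatters (flip fun x (F : 𝓕) => x ∈ (F : Set G)) X → k ≤ n :=
  ⟨fun hn k X hX => hn k (fun i => X i) (fun i => (X i).2) hX,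
    fun hn m X hX𝓕 hX => hn m (fun i => ⟨X i, hX𝓕 i⟩) hX⟩

end Membership

/-- A family of sets has finite VC-dimension iff it has finite dual
VC-dimension (all `2ⁿ` Venn cells of some `n` sets from the family are nonempty
only for boundedly many `n`). -/
theorem finiteVC_iff_finite_dual_VC {G : Type*} (𝓕 : Set (Set G)) :
    (∃ n : ℕ, ∀ A : Finset G, Shatters 𝓕 A → A.card ≤ n) ↔
    (∃ n : ℕ, ∀ (m : ℕ) (X : Fin m → Set G),
      (∀ i, X i ∈ 𝓕) →
      (∀ I : Set (Fin m), ∃ x : G, ∀ i, x ∈ X i ↔ i ∈ I) →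
      m ≤ n) := by
  simp only [forall_shatters_card_le_iff, forall_venn_cells_nonempty_le_iff]
  exact exists_bound_relShatters_iff_flip _
end

section
/- Let G be a group and X ⊆ G a subset such that the family of left translates {gX : g ∈ G} has finite VC-dimension. Then the pair (int(X), ext(X)) of the interior and exterior of X (with respect to any topology on G making multiplication separately continuous, e.g. a group topology) is a tame pair: there is a maximal n for which one can find g₀,…,g_{n-1} and points (x_η : η ∈ {0,1}^n) with g_k·x_η ∈ int(X) if η(k)=0 and g_k·x_η ∈ ext(X) if η(k)=1. -/
open Set Pointwise Topology

def FiniteVC {G : Type*} (𝓕 : Set (Set G)) : Prop :=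
  ∃ n : ℕ, ∀ A : Finset G, A.card = n → ¬ Shatters 𝓕 A

/-!
A configuration `g k * x η ∈ X ↔ η k = 0` indexed by `n ≥ 2 ^ m` translates witnesses that the
translates of `X` dually shatter a set of size `2 ^ m`. Indexing `2 ^ m` of the translates by the
subsets `s` of `Fin m` and taking the points `y i = x (fun s ↦ if i ∈ s then 0 else 1)`, the
translate `(g s)⁻¹ • X` cuts out exactly `{y i | i ∈ s}`, so the `m` points `y i` are shattered.
Finite VC-dimension therefore bounds `n`.
-/

section Shattering

variable {α ι : Type*} {𝓕 : Set (Set α)} {y : ι → α}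

theorem injective_of_forall_exists_preimage_eq
    (hy : ∀ s : Set ι, ∃ S ∈ 𝓕, y ⁻¹' S = s) : Function.Injective y := by
  intro i j hij
  obtain ⟨S, -, hS⟩ := hy {i}
  have hi : i ∈ y ⁻¹' S := hS ▸ rfl
  rw [mem_preimage, hij, ← mem_preimage, hS] at hi
  exact (mem_singleton_iff.mp hi).symm

theorem shatters_image_of_forall_exists_preimage_eq [Fintype ι] [DecidableEq α]
    (hy : ∀ s : Set ι, ∃ S ∈ 𝓕, y ⁻¹' S = s) : Shatters 𝓕 (Finset.univ.image y) := by
  intro B hB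
  obtain ⟨S, hS𝓕, hS⟩ := hy (y ⁻¹' B)
  refine ⟨S, hS𝓕, ?_⟩
  ext z
  simp only [Finset.coe_image, Finset.coe_univ, image_univ, mem_inter_iff, mem_range,
    Finset.mem_coe]
  constructor
  · rintro ⟨hzS, i, rfl⟩
    rwa [← mem_preimage, hS] at hzS
  · intro hzB
    obtain ⟨i, -, rfl⟩ := Finset.mem_image.mp (hB hzB)
    refine ⟨?_, i, rfl⟩
    rwa [← mem_preimage, hS]

end Shattering

section DualShattering

variable {G ι ι' : Type*} [Group G] {X : Set G} {g : ι → G} {x : (ι → Fin 2) → G}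

def IsDualShattering (X : Set G) (g : ι → G) (x : (ι → Fin 2) → G) : Prop :=
  ∀ k η, g k * x η ∈ X ↔ η k = 0

theorem isDualShattering_of_mem_interior [TopologicalSpace G]
    (h : ∀ k η, g k * x η ∈ (if η k = 0 then interior X else interior Xᶜ)) :
    IsDualShattering X g x := by
  intro k η
  specialize h k η
  split_ifs at h with hη
  · exact iff_of_true (interior_subset h) hη
  · exact iff_of_false (interior_subset h) hη

theorem IsDualShattering.comp_injective (hX : IsDualShattering X g x) {e : ι' → ι}
    (he : e.Injective) : IsDualShattering X (g ∘ e) (fun η ↦ x (Function.extend e η 0)) := by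
  intro k η
  simpa only [Function.comp_apply, he.extend_apply] using hX (e k) (Function.extend e η 0)

open Classical in
theorem IsDualShattering.forall_exists_preimage_eq {g : Set ι → G} {x : (Set ι → Fin 2) → G}
    (hX : IsDualShattering X g x) :
    ∀ s : Set ι, ∃ S ∈ {S : Set G | ∃ h : G, S = h • X},
      (fun i ↦ x (fun t ↦ if i ∈ t then 0 else 1)) ⁻¹' S = s := by
  intro s
  refine ⟨(g s)⁻¹ • X, ⟨_, rfl⟩, ?_⟩
  ext i
  simp only [mem_preimage, mem_inv_smul_set_iff, smul_eq_mul, hX s]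
  split_ifs with hi <;> simp [hi]

theorem IsDualShattering.lt_two_pow {m n : ℕ} {g : Fin n → G} {x : (Fin n → Fin 2) → G}
    (hm : ∀ A : Finset G, A.card = m → ¬ Shatters {S : Set G | ∃ h : G, S = h • X} A)
    (hX : IsDualShattering X g x) : n < 2 ^ m := by
  classical
  by_contra! hn
  obtain ⟨e⟩ : Nonempty (Set (Fin m) ↪ Fin n) :=
    Function.Embedding.nonempty_of_card_le (by simpa [Fintype.card_set] using hn)
  have hy := (hX.comp_injective e.injective).forall_exists_preimage_eq
  refine hm _ ?_ (shatters_image_of_forall_exists_preimage_eq hy)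
  rw [Finset.card_image_of_injective _ (injective_of_forall_exists_preimage_eq hy),
    Finset.card_univ, Fintype.card_fin]

end DualShattering

theorem vc_set_interior_exterior_tame_general
    {G : Type*} [Group G] [TopologicalSpace G]
    (X : Set G)
    (hVC : FiniteVC {S : Set G | ∃ g : G, S = g • X}) :
    ∃ N : ℕ, ∀ (n : ℕ) (g : Fin n → G) (x : (Fin n → Fin 2) → G),
      (∀ (k : Fin n) (η : Fin n → Fin 2),
        g k * x η ∈ (if η k = 0 then interior X else interior Xᶜ)) → n ≤ N := by
  obtain ⟨m, hm⟩ := hVC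
  refine ⟨2 ^ m - 1, fun n g x hgx ↦ ?_⟩
  have := (isDualShattering_of_mem_interior hgx).lt_two_pow hm
  omega

/-- If the family of left translates of `X` has finite VC-dimension, then
`(interior X, interior Xᶜ)` is a tame pair. -/
theorem vc_set_interior_exterior_tame
    {G : Type*} [Group G] [TopologicalSpace G] [IsTopologicalGroup G]
    (X : Set G)
    (hVC : FiniteVC {S : Set G | ∃ g : G, S = g • X}) :
    ∃ N : ℕ, ∀ (n : ℕ) (g : Fin n → G) (x : (Fin n → Fin 2) → G),
      (∀ (k : Fin n) (η : Fin n → Fin 2),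
        g k * x η ∈ (if η k = 0 then interior X else interior Xᶜ)) → n ≤ N :=
  vc_set_interior_exterior_tame_general X hVC
end

section
/- There exists a subset X ⊆ ℝ such that: (1) X is locally closed (hence constructible), (2) the family of translates {t + X : t ∈ ℝ} has finite VC-dimension (indeed it shatters no 3-element set), and (3) the topological frontier ∂X = cl(X) \ int(X) has positive Lebesgue measure. -/
open Set Topology MeasureTheory

namespace VC11
open Metric Classical ENNReal

noncomputable def qseq : ℕ → ℝ := fun n => ((Denumerable.ofNat ℚ n : ℚ) : ℝ)

noncomputable def Kset : Set ℝ :=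
  Icc (0:ℝ) 1 \ ⋃ n : ℕ, Metric.ball (qseq n) (8⁻¹ * 2⁻¹ ^ n)

lemma isClosed_Kset : IsClosed Kset :=
  isClosed_Icc.sdiff (isOpen_iUnion fun _ => Metric.isOpen_ball)

lemma Kset_vol : 2⁻¹ ≤ volume Kset := by
  have h1 : volume (⋃ n : ℕ, Metric.ball (qseq n) (8⁻¹ * 2⁻¹ ^ n)) ≤ 2⁻¹ := by
    refine le_trans (measure_iUnion_le _) ?_
    have hb : ∀ n : ℕ, volume (Metric.ball (qseq n) (8⁻¹ * 2⁻¹ ^ n)) = 4⁻¹ * 2⁻¹ ^ n := by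
      intro n
      rw [Real.volume_ball, show (2:ℝ) * (8⁻¹ * 2⁻¹ ^ n) = 1/4 * (1/2) ^ n by ring,
        ENNReal.ofReal_mul (by norm_num), ENNReal.ofReal_pow (by norm_num)]
      congr 1
      · rw [show (1/4:ℝ) = (4:ℝ)⁻¹ by norm_num, ENNReal.ofReal_inv_of_pos (by norm_num)]
        norm_num
      · congr 1
        rw [show (1/2:ℝ) = (2:ℝ)⁻¹ by norm_num, ENNReal.ofReal_inv_of_pos (by norm_num)]
        norm_num
    simp_rw [hb]
    rw [ENNReal.tsum_mul_left, ENNReal.tsum_geometric]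
    rw [ENNReal.one_sub_inv_two, inv_inv, show (4:ℝ≥0∞) = 2*2 by norm_num,
      ENNReal.mul_inv (by norm_num) (by norm_num), mul_assoc,
      ENNReal.inv_mul_cancel (by norm_num) (by norm_num), mul_one]
  calc (2⁻¹ : ℝ≥0∞) = 1 - 2⁻¹ := ENNReal.one_sub_inv_two.symm
    _ ≤ volume (Icc (0:ℝ) 1) - volume (⋃ n : ℕ, Metric.ball (qseq n) (8⁻¹ * 2⁻¹ ^ n)) := by
        refine tsub_le_tsub ?_ h1
        rw [Real.volume_Icc]; norm_num
    _ ≤ volume Kset := le_measure_diff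

lemma Kset_vol_pos : 0 < volume Kset := lt_of_lt_of_le (by norm_num) Kset_vol

lemma Kset_nonempty : Kset.Nonempty :=
  nonempty_of_measure_ne_zero (Kset_vol_pos.ne')

/-- every ball contains a point not in `Kset` -/
lemma ball_not_subset_Kset (t r : ℝ) (hr : 0 < r) : ∃ y ∈ Metric.ball t r, y ∉ Kset := by
  obtain ⟨q, hq⟩ := Rat.denseRange_cast (𝕜 := ℝ) |>.exists_mem_open Metric.isOpen_ball
    ⟨t, Metric.mem_ball_self hr⟩
  refine ⟨(q : ℝ), hq, ?_⟩
  intro hK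
  have : (q : ℝ) ∈ ⋃ n : ℕ, Metric.ball (qseq n) (8⁻¹ * 2⁻¹ ^ n) := by
    refine mem_iUnion.2 ⟨@Encodable.encode ℚ Denumerable.toEncodable q, ?_⟩
    have : qseq (@Encodable.encode ℚ Denumerable.toEncodable q) = (q : ℝ) :=
      congrArg (fun x : ℚ => (x : ℝ)) (Denumerable.ofNat_encode q)
    rw [this]
    exact Metric.mem_ball_self (by positivity)
  exact hK.2 this

noncomputable def badlist (l : List ℝ) : List ℝ :=
  (l.flatMap fun p => l.flatMap fun q => l.map fun s => p + q - s) ++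
  (l.flatMap fun p => l.map fun q => (p + q) / 2)

lemma mem_badlist₁ {l : List ℝ} {p q s : ℝ} (hp : p ∈ l) (hq : q ∈ l) (hs : s ∈ l) :
    p + q - s ∈ badlist l := by
  refine List.mem_append.2 (Or.inl ?_)
  exact List.mem_flatMap.2 ⟨p, hp, List.mem_flatMap.2 ⟨q, hq, List.mem_map.2 ⟨s, hs, rfl⟩⟩⟩

lemma mem_badlist₂ {l : List ℝ} {p q : ℝ} (hp : p ∈ l) (hq : q ∈ l) :
    (p + q) / 2 ∈ badlist l := by
  refine List.mem_append.2 (Or.inr ?_)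
  exact List.mem_flatMap.2 ⟨p, hp, List.mem_map.2 ⟨q, hq, rfl⟩⟩

lemma exists_pt (t r : ℝ) (hr : 0 < r) (l : List ℝ) :
    ∃ y, y ∈ Metric.ball t r ∧ y ∉ Kset ∧ y ∉ badlist l := by
  set O : Set ℝ := Metric.ball t r \ Kset with hO
  have hOopen : IsOpen O := Metric.isOpen_ball.sdiff isClosed_Kset
  have hOne : O.Nonempty := by
    obtain ⟨y, hy, hyK⟩ := ball_not_subset_Kset t r hr
    exact ⟨y, hy, hyK⟩
  have hvol : 0 < volume O := hOopen.measure_pos volume hOne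
  have : ¬ O ⊆ {y | y ∈ badlist l} := by
    intro hsub
    have hc : ({y | y ∈ badlist l} : Set ℝ).Countable := (badlist l).finite_toSet.countable
    have := measure_mono_null hsub (hc.measure_zero volume)
    exact hvol.ne' (by simpa using this)
  obtain ⟨y, hyO, hyb⟩ := not_subset.1 this
  exact ⟨y, hyO.1, hyO.2, hyb⟩

lemma exists_dseq : ∃ d : ℕ → ℝ, (∀ n, d n ∈ Kset) ∧ Kset ⊆ closure (range d) := by
  have : Nonempty (↥Kset) := Kset_nonempty.to_subtype
  obtain ⟨s, hsc, hsd⟩ := TopologicalSpace.exists_countable_dense (↥Kset)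
  have hne : s.Nonempty := hsd.nonempty
  obtain ⟨f, hf⟩ := (hsc.image Subtype.val).exists_eq_range (hne.image _)
  refine ⟨f, ?_, ?_⟩
  · intro n
    have : f n ∈ Subtype.val '' s := hf ▸ mem_range_self n
    obtain ⟨⟨x, hx⟩, _, rfl⟩ := this
    exact hx
  · intro p hp
    have h1 : (⟨p, hp⟩ : ↥Kset) ∈ closure s := hsd.closure_eq ▸ mem_univ _
    have h2 : p ∈ Subtype.val '' closure s := ⟨⟨p, hp⟩, h1, rfl⟩
    have h3 : Subtype.val '' closure s ⊆ closure (Subtype.val '' s) :=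
      image_closure_subset_closure_image continuous_subtype_val
    rw [← hf]
    exact h3 h2

noncomputable def dseq : ℕ → ℝ := Classical.choose exists_dseq

lemma dseq_mem (n : ℕ) : dseq n ∈ Kset := (Classical.choose_spec exists_dseq).1 n
lemma Kset_subset_closure : Kset ⊆ closure (range dseq) :=
  (Classical.choose_spec exists_dseq).2

noncomputable def seqL : ℕ → List ℝ
  | 0 => []
  | (k+1) => seqL k ++
      [Classical.choose (exists_pt (dseq (Nat.unpair k).1) (1/(k+1)) (by positivity) (seqL k))]

noncomputable def xseq (k : ℕ) : ℝ :=
  Classical.choose (exists_pt (dseq (Nat.unpair k).1) (1/(k+1)) (by positivity) (seqL k))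

lemma seqL_succ (k : ℕ) : seqL (k+1) = seqL k ++ [xseq k] := rfl

lemma xseq_spec (k : ℕ) :
    xseq k ∈ Metric.ball (dseq (Nat.unpair k).1) (1/(k+1)) ∧ xseq k ∉ Kset ∧
      xseq k ∉ badlist (seqL k) :=
  Classical.choose_spec (exists_pt (dseq (Nat.unpair k).1) (1/(k+1)) (by positivity) (seqL k))

lemma mem_seqL {j k : ℕ} (h : j < k) : xseq j ∈ seqL k := by
  induction k with
  | zero => omega
  | succ k ih =>
      rw [seqL_succ]
      rcases Nat.lt_succ_iff_lt_or_eq.1 h with h' | rfl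
      · exact List.mem_append.2 (Or.inl (ih h'))
      · exact List.mem_append.2 (Or.inr (List.mem_singleton.2 rfl))

lemma xseq_notbad₁ {i j s k : ℕ} (hi : i < k) (hj : j < k) (hs : s < k) :
    xseq k ≠ xseq i + xseq j - xseq s := by
  intro h
  exact (xseq_spec k).2.2 (h ▸ mem_badlist₁ (mem_seqL hi) (mem_seqL hj) (mem_seqL hs))

lemma xseq_notbad₂ {i j k : ℕ} (hi : i < k) (hj : j < k) :
    xseq k ≠ (xseq i + xseq j) / 2 := by
  intro h
  exact (xseq_spec k).2.2 (h ▸ mem_badlist₂ (mem_seqL hi) (mem_seqL hj))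

lemma xseq_ne {j k : ℕ} (h : j < k) : xseq k ≠ xseq j := by
  have := xseq_notbad₁ h h h
  intro he
  exact this (by rw [he]; ring)

lemma xseq_inj : Function.Injective xseq := by
  intro a b h
  rcases lt_trichotomy a b with h' | h' | h'
  · exact absurd h.symm (xseq_ne h')
  · exact h'
  · exact absurd h (xseq_ne h')

/-- Sidon property at the level of indices, assuming the max is on the unprimed side. -/
lemma sidon_aux {i j i' j' : ℕ} (hij : i ≠ j)
    (heq : xseq i - xseq j = xseq i' - xseq j')
    (hmax : max i' j' ≤ max i j) : i = i' ∧ j = j' := by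
  have hij' : i' ≠ j' := by
    intro h
    subst h
    have : xseq i = xseq j := by linarith [heq]
    exact hij (xseq_inj this)
  rcases lt_or_gt_of_ne hij with hlt | hgt
  · -- i < j, so j is the strict max
    have hj' : j' ≤ j := le_trans (le_max_right i' j') (hmax.trans (by simp [hlt.le, max_eq_right]))
    have hi' : i' ≤ j := le_trans (le_max_left i' j') (hmax.trans (by simp [hlt.le, max_eq_right]))
    rcases eq_or_lt_of_le hj' with rfl | hj'lt
    · constructor
      · exact xseq_inj (by linarith [heq])
      · rfl
    · rcases eq_or_lt_of_le hi' with rfl | hi'lt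
      · exfalso
        have : xseq i' = (xseq i + xseq j') / 2 := by linarith [heq]
        exact xseq_notbad₂ hlt hj'lt this
      · exfalso
        have : xseq j = xseq i + xseq j' - xseq i' := by linarith [heq]
        exact xseq_notbad₁ hlt hj'lt hi'lt this
  · -- j < i, i is the strict max
    have hj' : j' ≤ i := le_trans (le_max_right i' j') (hmax.trans (by simp [hgt.le, max_eq_left]))
    have hi' : i' ≤ i := le_trans (le_max_left i' j') (hmax.trans (by simp [hgt.le, max_eq_left]))
    rcases eq_or_lt_of_le hi' with rfl | hi'lt
    · constructor
      · rfl
      · exact xseq_inj (by linarith [heq])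
    · rcases eq_or_lt_of_le hj' with rfl | hj'lt
      · exfalso
        have : xseq j' = (xseq j + xseq i') / 2 := by linarith [heq]
        exact xseq_notbad₂ hgt hi'lt this
      · exfalso
        have : xseq i = xseq j + xseq i' - xseq j' := by linarith [heq]
        exact xseq_notbad₁ hgt hi'lt hj'lt this

lemma sidon {i j i' j' : ℕ} (hij : i ≠ j)
    (heq : xseq i - xseq j = xseq i' - xseq j') : i = i' ∧ j = j' := by
  rcases le_total (max i' j') (max i j) with h | h
  · exact sidon_aux hij heq h
  · have hij' : i' ≠ j' := by
      intro h
      subst h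
      have : xseq i = xseq j := by linarith [heq]
      exact hij (xseq_inj this)
    obtain ⟨h1, h2⟩ := sidon_aux hij' (by linarith [heq]) h
    exact ⟨h1.symm, h2.symm⟩

noncomputable def Xset : Set ℝ := range xseq

lemma sidon_val {u v u' v' : ℝ} (hu : u ∈ Xset) (hv : v ∈ Xset) (hu' : u' ∈ Xset)
    (hv' : v' ∈ Xset) (huv : u ≠ v) (heq : u - v = u' - v') : u = u' ∧ v = v' := by
  obtain ⟨i, rfl⟩ := hu
  obtain ⟨j, rfl⟩ := hv
  obtain ⟨i', rfl⟩ := hu'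
  obtain ⟨j', rfl⟩ := hv'
  have hij : i ≠ j := fun h => huv (by rw [h])
  obtain ⟨h1, h2⟩ := sidon hij heq
  exact ⟨by rw [h1], by rw [h2]⟩

lemma Xset_disjoint_Kset : ∀ x ∈ Xset, x ∉ Kset := by
  rintro x ⟨k, rfl⟩
  exact (xseq_spec k).2.1

lemma xseq_infDist (k : ℕ) : Metric.infDist (xseq k) Kset < 1/(k+1) :=
  lt_of_le_of_lt (Metric.infDist_le_dist_of_mem (dseq_mem _)) (xseq_spec k).1

lemma dseq_mem_closure_Xset (n : ℕ) : dseq n ∈ closure Xset := by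
  rw [Metric.mem_closure_iff]
  intro ε hε
  obtain ⟨m, hm⟩ := exists_nat_one_div_lt hε
  refine ⟨xseq (Nat.pair n m), mem_range_self _, ?_⟩
  have h1 : dist (xseq (Nat.pair n m)) (dseq n) < 1/(Nat.pair n m + 1) := by
    have := (xseq_spec (Nat.pair n m)).1
    rwa [Nat.unpair_pair] at this
  have hmp : (m:ℝ) ≤ Nat.pair n m := by exact_mod_cast Nat.right_le_pair n m
  have h2 : (1:ℝ)/(Nat.pair n m + 1) ≤ 1/(m+1) :=
    one_div_le_one_div_of_le (by positivity) (by linarith)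
  calc dist (dseq n) (xseq (Nat.pair n m)) < 1/(Nat.pair n m + 1) := by
        rw [dist_comm]; exact h1
    _ ≤ 1/(m+1) := h2
    _ < ε := by exact_mod_cast hm

lemma Kset_subset_closure_Xset : Kset ⊆ closure Xset := by
  refine Kset_subset_closure.trans ?_
  rw [show closure Xset = closure (closure Xset) from (closure_closure).symm]
  exact closure_mono (range_subset_iff.2 dseq_mem_closure_Xset)

lemma isClosed_union : IsClosed (Xset ∪ Kset) := by
  rw [← closure_subset_iff_isClosed]
  intro y hy
  by_contra hyn
  have hyX : y ∉ Xset := fun h => hyn (Or.inl h)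
  have hyK : y ∉ Kset := fun h => hyn (Or.inr h)
  have hδ : 0 < Metric.infDist y Kset :=
    (isClosed_Kset.notMem_iff_infDist_pos Kset_nonempty).1 hyK
  set δ := Metric.infDist y Kset with hδdef
  -- choose N with 1/(N+1) < δ/2
  obtain ⟨N, hN⟩ := exists_nat_one_div_lt (half_pos hδ)
  -- far from the tail of the sequence
  have htail : ∀ k : ℕ, N ≤ k → δ/2 ≤ dist y (xseq k) := by
    intro k hk
    have h1 : Metric.infDist (xseq k) Kset < 1/(N+1) := by
      refine lt_of_lt_of_le (xseq_infDist k) ?_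
      have : (N:ℝ) ≤ k := by exact_mod_cast hk
      exact one_div_le_one_div_of_le (by positivity) (by linarith)
    have h2 : δ ≤ Metric.infDist (xseq k) Kset + dist y (xseq k) :=
      Metric.infDist_le_infDist_add_dist
    nlinarith [hN]
  -- far from the finitely many initial points
  have hfin : Set.Finite (xseq '' {k | k < N}) := (Set.finite_lt_nat N).image _
  have hyF : y ∉ xseq '' {k | k < N} := by
    rintro ⟨k, _, rfl⟩
    exact hyX (mem_range_self k)
  obtain ⟨ε, hε, hball⟩ := Metric.isOpen_iff.1 hfin.isClosed.isOpen_compl y hyF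
  set r := min (min (δ/2) δ) ε with hr
  have hrpos : 0 < r := by
    refine lt_min (lt_min (half_pos hδ) hδ) hε
  obtain ⟨z, hz, hzd⟩ := Metric.mem_closure_iff.1 hy r hrpos
  rcases hz with hzX | hzK
  · obtain ⟨k, rfl⟩ := hzX
    rcases lt_or_ge k N with hk | hk
    · have : xseq k ∈ Metric.ball y ε := Metric.mem_ball'.2 (lt_of_lt_of_le hzd (min_le_right _ _))
      exact hball this ⟨k, hk, rfl⟩
    · have h1 : δ/2 ≤ dist y (xseq k) := htail k hk
      have h2 : r ≤ δ/2 := le_trans (min_le_left _ _) (min_le_left _ _)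
      linarith
  · have h1 : δ ≤ dist y z := Metric.infDist_le_dist_of_mem hzK
    have h2 : r ≤ δ := le_trans (min_le_left _ _) (min_le_right _ _)
    linarith

lemma closure_Xset : closure Xset = Xset ∪ Kset := by
  apply subset_antisymm
  · exact closure_minimal subset_union_left isClosed_union
  · refine union_subset subset_closure Kset_subset_closure_Xset

lemma isLocallyClosed_Xset : IsLocallyClosed Xset := by
  refine ⟨Ksetᶜ, Xset ∪ Kset, isClosed_Kset.isOpen_compl, isClosed_union, ?_⟩
  ext x
  constructor
  · intro hx
    exact ⟨Xset_disjoint_Kset x hx, Or.inl hx⟩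
  · rintro ⟨hxc, hx | hx⟩
    · exact hx
    · exact absurd hx hxc

lemma interior_Xset : interior Xset = (∅ : Set ℝ) := by
  by_contra h
  have hne : (interior Xset).Nonempty := nonempty_iff_ne_empty.2 h
  have h1 : 0 < volume (interior Xset) := isOpen_interior.measure_pos volume hne
  have h2 : volume Xset = 0 := (countable_range xseq).measure_zero volume
  exact h1.ne' (le_antisymm ((measure_mono interior_subset).trans h2.le) zero_le)

lemma frontier_Xset_vol : 0 < volume (frontier Xset) := by
  have : Kset ⊆ frontier Xset := by
    rw [frontier, closure_Xset, interior_Xset]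
    intro x hx
    exact ⟨Or.inr hx, notMem_empty x⟩
  exact lt_of_lt_of_le Kset_vol_pos (measure_mono this)

end VC11

/-- There is a locally closed subset of `ℝ` whose family of translates
shatters no 3-element set (so has finite VC-dimension) but whose frontier has positive
Lebesgue measure. -/
theorem exists_locally_closed_vc_set_frontier_pos :
    ∃ X : Set ℝ,
      IsLocallyClosed X ∧
      (∀ A : Finset ℝ, A.card = 3 →
        ¬ Shatters {S : Set ℝ | ∃ t : ℝ, S = (fun x => t + x) '' X} A) ∧
      0 < volume (frontier X) := by
  refine ⟨VC11.Xset, VC11.isLocallyClosed_Xset, ?_, VC11.frontier_Xset_vol⟩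
  intro A hA hsh
  obtain ⟨a, b, c, hab, hac, hbc, rfl⟩ := Finset.card_eq_three.1 hA
  obtain ⟨S1, ⟨t1, rfl⟩, hS1⟩ := hsh {a, b, c} (Finset.Subset.refl _)
  obtain ⟨S2, ⟨t2, rfl⟩, hS2⟩ := hsh {a, b}
    (by simp [Finset.insert_subset_iff])
  have hmem : ∀ (t x : ℝ), x ∈ (fun y => t + y) '' VC11.Xset ↔ x - t ∈ VC11.Xset := by
    intro t x
    constructor
    · rintro ⟨u, hu, rfl⟩; simpa using hu
    · intro h; exact ⟨x - t, h, by ring⟩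
  have hsub1 : (↑({a, b, c} : Finset ℝ) : Set ℝ) ⊆ (fun y => t1 + y) '' VC11.Xset := by
    rw [← hS1]; exact inter_subset_left
  have hsub2 : (↑({a, b} : Finset ℝ) : Set ℝ) ⊆ (fun y => t2 + y) '' VC11.Xset := by
    rw [← hS2]; exact inter_subset_left
  have haX1 : a - t1 ∈ VC11.Xset := (hmem t1 a).1 (hsub1 (by simp))
  have hbX1 : b - t1 ∈ VC11.Xset := (hmem t1 b).1 (hsub1 (by simp))
  have hcX1 : c - t1 ∈ VC11.Xset := (hmem t1 c).1 (hsub1 (by simp))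
  have haX2 : a - t2 ∈ VC11.Xset := (hmem t2 a).1 (hsub2 (by simp))
  have hbX2 : b - t2 ∈ VC11.Xset := (hmem t2 b).1 (hsub2 (by simp))
  have hne : b - t1 ≠ a - t1 := fun h => hab (by linarith : a = b)
  have heq : (b - t1) - (a - t1) = (b - t2) - (a - t2) := by ring
  obtain ⟨h1, h2⟩ := VC11.sidon_val hbX1 haX1 hbX2 haX2 hne heq
  have ht : t1 = t2 := by linarith
  have hc2 : c ∈ (fun y => t2 + y) '' VC11.Xset := (hmem t2 c).2 (ht ▸ hcX1)
  have : c ∈ (↑({a, b} : Finset ℝ) : Set ℝ) := by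
    rw [← hS2]
    exact ⟨hc2, by simp⟩
  simp only [Finset.coe_insert, Finset.coe_singleton, mem_insert_iff, mem_singleton_iff] at this
  rcases this with h | h
  · exact hac h.symm
  · exact hbc h.symm
end

section
/- Let K be a compact Hausdorff group with Haar probability measure h, and let X ⊆ K be Borel with h(∂X) = 0. For every ε > 0 there exist finitely many points k₁,…,kₙ ∈ K such that if D ⊆ K is any dense subset, one can choose d₁,…,dₙ ∈ D with |h(gX) − (1/n)|{i : dᵢ ∈ gX}|| ≤ 3ε for every g ∈ K, provided the family {gX : g ∈ K} has finite VC-dimension and K is second countable. -/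
open MeasureTheory Set Pointwise Topology
open scoped Classical

noncomputable def Av {Ω : Type*} {n : ℕ} (x : Fin n → Ω) (S : Set Ω) : ℝ :=
  (Finset.univ.filter (fun i => x i ∈ S)).card / n

/-! Since `h (∂X) = 0`, Urysohn's lemma and the regularity of `h` give continuous functions
`φ ≤ 𝟙_X ≤ ψ` with values in `[0, 1]` whose integrals are within `ε/2` of `h X`. By compactness
all left translates of `φ` and `ψ` share one modulus of continuity `δ`. Partition `K` into finitely
many measurable cells lying in `δ`-balls and repeat the centre of each cell a number of times
proportional to its measure: the resulting equal-weight quadrature rule integrates every function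
with modulus `δ` up to a small error, and it still does so after each node is moved by less than
`δ`, in particular into an arbitrary dense set. The averages of the translates of `φ` and `ψ`
then squeeze the counting average of `gX` around `h (gX) = h X`. -/

open Function

theorem IsTopologicalGroup.pseudoMetrizableSpace (G : Type*) [Group G] [TopologicalSpace G]
    [IsTopologicalGroup G] [FirstCountableTopology G] :
    TopologicalSpace.PseudoMetrizableSpace G :=
  letI := IsTopologicalGroup.rightUniformSpace G
  haveI : (uniformity G).IsCountablyGenerated := Filter.comap.isCountablyGenerated _ _
  inferInstance

theorem uniformEquicontinuous_comp_inv_mul {K : Type*} [Group K] [PseudoMetricSpace K]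
    [IsTopologicalGroup K] [CompactSpace K] {f : K → ℝ} (hf : Continuous f) :
    UniformEquicontinuous fun g x => f (g⁻¹ * x) := by
  have huc : UniformContinuous fun p : K × K => f (p.1⁻¹ * p.2) :=
    CompactSpace.uniformContinuous_of_continuous (by fun_prop)
  rw [Metric.uniformEquicontinuous_iff]
  intro η hη
  obtain ⟨δ, hδ, hδη⟩ := Metric.uniformContinuous_iff.1 huc η hη
  refine ⟨δ, hδ, fun x y hxy g => hδη (a := (g, x)) (b := (g, y)) ?_⟩
  rwa [Prod.dist_eq, dist_self, max_eq_right dist_nonneg]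

section NullFrontier

variable {α : Type*} [TopologicalSpace α] [NormalSpace α] [MeasurableSpace α]
  [OpensMeasurableSpace α] (μ : Measure α) [IsFiniteMeasure μ] {X : Set α} {η : ℝ}

theorem exists_continuous_le_indicator_of_null_frontier [μ.WeaklyRegular]
    (hX : μ (frontier X) = 0) (hη : 0 < η) :
    ∃ φ : α → ℝ, Continuous φ ∧ (∀ x, |φ x| ≤ 1) ∧ (∀ x, φ x ≤ X.indicator 1 x) ∧
      μ.real X - η ≤ ∫ x, φ x ∂μ := by
  obtain ⟨C, hCX, hC, hμC⟩ := isOpen_interior.measurableSet.exists_isClosed_lt_add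
    (measure_ne_top μ (interior X)) (ENNReal.ofReal_pos.2 hη).ne'
  obtain ⟨φ, hφ0, hφ1, hφ01⟩ := exists_continuous_zero_one_of_isClosed
    isOpen_interior.isClosed_compl hC (disjoint_compl_left.mono_right hCX)
  have hφ_abs (x) : |φ x| ≤ 1 := abs_le.2 ⟨by linarith [(hφ01 x).1], (hφ01 x).2⟩
  have hφX (x) : φ x ≤ X.indicator 1 x := by
    by_cases hx : x ∈ interior X
    · rw [indicator_of_mem (interior_subset hx)]; exact (hφ01 x).2
    · rw [hφ0 hx]; exact indicator_nonneg (fun _ _ => zero_le_one) x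
  have hCφ (x) : C.indicator 1 x ≤ φ x := by
    by_cases hx : x ∈ C
    · rw [indicator_of_mem hx, hφ1 hx]
    · rw [indicator_of_notMem hx]; exact (hφ01 x).1
  refine ⟨φ, φ.continuous, hφ_abs, hφX, ?_⟩
  have hμC' := ENNReal.toReal_le_add hμC.le (measure_ne_top μ C) ENNReal.ofReal_ne_top
  rw [ENNReal.toReal_ofReal hη.le, ← measureReal_def, ← measureReal_def,
    measureReal_congr (interior_ae_eq_of_null_frontier hX)] at hμC'
  calc μ.real X - η ≤ μ.real C := by linarith
    _ = ∫ x, C.indicator 1 x ∂μ := (integral_indicator_one hC.measurableSet).symm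
    _ ≤ ∫ x, φ x ∂μ := integral_mono ((integrable_const 1).indicator hC.measurableSet)
        (.of_bound φ.continuous.aestronglyMeasurable 1 (.of_forall hφ_abs)) hCφ

theorem exists_continuous_indicator_le_of_null_frontier [μ.OuterRegular]
    (hX : μ (frontier X) = 0) (hη : 0 < η) :
    ∃ ψ : α → ℝ, Continuous ψ ∧ (∀ x, |ψ x| ≤ 1) ∧ (∀ x, X.indicator 1 x ≤ ψ x) ∧
      ∫ x, ψ x ∂μ ≤ μ.real X + η := by
  obtain ⟨U, hXU, hU, hμU⟩ := (closure X).exists_isOpen_lt_add (measure_ne_top μ _)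
    (ENNReal.ofReal_pos.2 hη).ne'
  obtain ⟨ψ, hψ0, hψ1, hψ01⟩ := exists_continuous_zero_one_of_isClosed
    hU.isClosed_compl isClosed_closure (disjoint_compl_left.mono_right hXU)
  have hψ_abs (x) : |ψ x| ≤ 1 := abs_le.2 ⟨by linarith [(hψ01 x).1], (hψ01 x).2⟩
  have hψX (x) : X.indicator 1 x ≤ ψ x := by
    by_cases hx : x ∈ X
    · rw [indicator_of_mem hx, hψ1 (subset_closure hx)]
    · rw [indicator_of_notMem hx]; exact (hψ01 x).1
  have hψU (x) : ψ x ≤ U.indicator 1 x := by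
    by_cases hx : x ∈ U
    · rw [indicator_of_mem hx]; exact (hψ01 x).2
    · rw [indicator_of_notMem hx, hψ0 hx]; rfl
  refine ⟨ψ, ψ.continuous, hψ_abs, hψX, ?_⟩
  have hμU' := ENNReal.toReal_le_add hμU.le (measure_ne_top μ _) ENNReal.ofReal_ne_top
  rw [ENNReal.toReal_ofReal hη.le, ← measureReal_def, ← measureReal_def,
    measureReal_congr (closure_ae_eq_of_null_frontier hX)] at hμU'
  calc ∫ x, ψ x ∂μ ≤ ∫ x, U.indicator 1 x ∂μ :=
        integral_mono (.of_bound ψ.continuous.aestronglyMeasurable 1 (.of_forall hψ_abs))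
          ((integrable_const 1).indicator hU.measurableSet) hψU
    _ = μ.real U := integral_indicator_one hU.measurableSet
    _ ≤ μ.real X + η := hμU'

end NullFrontier

theorem exists_nat_sum_eq_sum_abs_sub_le {ι : Type*} [Fintype ι] {w : ι → ℝ}
    (hw : ∀ i, 0 ≤ w i) (hsum : ∑ i, w i = 1) (N : ℕ) :
    ∃ c : ι → ℕ, ∑ i, c i = N ∧ ∑ i, |(c i : ℝ) - N * w i| ≤ 2 * Fintype.card ι := by
  obtain ⟨i₀⟩ : Nonempty ι := by
    by_contra hempty
    simp [not_nonempty_iff.mp hempty] at hsum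
  set f : ι → ℕ := fun i => ⌊N * w i⌋₊
  have hf_le (i) : (f i : ℝ) ≤ N * w i := Nat.floor_le (by have := hw i; positivity)
  have hf_gt (i) : N * w i - 1 < f i := by
    have := Nat.lt_floor_add_one (N * w i); linarith
  have hsum_f : ∑ i, f i ≤ N := by
    suffices (∑ i, f i : ℝ) ≤ N by exact_mod_cast this
    calc (∑ i, f i : ℝ) ≤ ∑ i, N * w i := Finset.sum_le_sum fun i _ => hf_le i
      _ = N := by rw [← Finset.mul_sum, hsum, mul_one]
  -- the rounding deficit `r` is at most the number of summands; it all goes to `i₀`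
  set r := N - ∑ i, f i
  have hr : (r : ℝ) ≤ Fintype.card ι := by
    have : (r : ℝ) = ∑ i, (N * w i - f i) := by
      rw [Nat.cast_sub hsum_f, Finset.sum_sub_distrib, ← Finset.mul_sum, hsum, mul_one]
      push_cast; rfl
    rw [this, Fintype.card_eq_sum_ones, Nat.cast_sum, Nat.cast_one]
    exact Finset.sum_le_sum fun i _ => by linarith [hf_gt i]
  refine ⟨fun i => f i + if i = i₀ then r else 0, ?_, ?_⟩
  · simp [Finset.sum_add_distrib, r, hsum_f]
  · calc ∑ i, |((f i + if i = i₀ then r else 0 : ℕ) : ℝ) - N * w i|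
        ≤ ∑ i, (1 + ((if i = i₀ then r else 0 : ℕ) : ℝ)) := by
          refine Finset.sum_le_sum fun i _ => ?_
          rw [Nat.cast_add, add_sub_right_comm]
          refine (abs_add_le _ _).trans (add_le_add ?_ (abs_of_nonneg (by positivity)).le)
          rw [abs_sub_comm, abs_of_nonneg (by linarith [hf_le i])]
          linarith [hf_gt i]
      _ = Fintype.card ι + r := by simp [Finset.sum_add_distrib]
      _ ≤ 2 * Fintype.card ι := by linarith

theorem exists_measurable_partition_subset_ball {K : Type*} [PseudoMetricSpace K]
    [CompactSpace K] [MeasurableSpace K] [OpensMeasurableSpace K] {δ : ℝ} (hδ : 0 < δ) :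
    ∃ (m : ℕ) (q : Fin m → K) (A : Fin m → Set K), (∀ j, MeasurableSet (A j)) ∧
      Pairwise (Disjoint on A) ∧ (⋃ j, A j) = univ ∧ ∀ j, A j ⊆ Metric.ball (q j) δ := by
  obtain ⟨t, -, ht, hcover⟩ := finite_cover_balls_of_compact (isCompact_univ (X := K)) hδ
  let q : Fin ht.toFinset.card → K := fun j => ht.toFinset.equivFin.symm j
  have hq_cover : (⋃ j, Metric.ball (q j) δ) = univ := by
    refine eq_univ_of_forall fun x => ?_
    obtain ⟨p, hp, hxp⟩ := mem_iUnion₂.1 (hcover (mem_univ x))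
    exact mem_iUnion.2 ⟨ht.toFinset.equivFin ⟨p, ht.mem_toFinset.2 hp⟩, by simpa [q] using hxp⟩
  refine ⟨_, q, disjointed fun j => Metric.ball (q j) δ, fun j => ?_, disjoint_disjointed _,
    iUnion_disjointed.trans hq_cover, disjointed_subset _⟩
  exact disjointedRec (fun _ _ ht => ht.diff measurableSet_ball) measurableSet_ball

theorem abs_integral_sub_sum_measureReal_mul_le {α ι : Type*} [MeasurableSpace α]
    {μ : Measure α} [IsFiniteMeasure μ] [Fintype ι] {A : ι → Set α}
    (hA : ∀ j, MeasurableSet (A j)) (hdisj : Pairwise (Disjoint on A))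
    (hcover : (⋃ j, A j) = univ) {f : α → ℝ} (hf : Integrable f μ) {c : ι → ℝ} {η : ℝ}
    (hfc : ∀ j, ∀ x ∈ A j, |f x - c j| ≤ η) :
    |∫ x, f x ∂μ - ∑ j, μ.real (A j) * c j| ≤ η * μ.real univ := by
  have hsplit : ∫ x, f x ∂μ - ∑ j, μ.real (A j) * c j = ∑ j, ∫ x in A j, (f x - c j) ∂μ := by
    rw [← setIntegral_univ, ← hcover, integral_iUnion_fintype hA hdisj fun j => hf.integrableOn,
      ← Finset.sum_sub_distrib]
    refine Finset.sum_congr rfl fun j _ => ?_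
    rw [integral_sub hf.integrableOn (integrableOn_const (measure_ne_top μ _)),
      setIntegral_const, smul_eq_mul]
  calc |∫ x, f x ∂μ - ∑ j, μ.real (A j) * c j|
      ≤ ∑ j, η * μ.real (A j) := by
        rw [hsplit]
        refine (Finset.abs_sum_le_sum_abs _ _).trans (Finset.sum_le_sum fun j _ => ?_)
        exact norm_setIntegral_le_of_norm_le_const (f := fun x => f x - c j)
          (measure_lt_top μ _) (hfc j)
    _ = η * μ.real univ := by
        rw [← Finset.mul_sum, ← measureReal_iUnion_fintype hdisj hA, hcover]

theorem abs_sum_mul_sub_sum_mul_le {ι : Type*} [Fintype ι] {u v b : ι → ℝ}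
    (hb : ∀ j, |b j| ≤ 1) : |∑ j, u j * b j - ∑ j, v j * b j| ≤ ∑ j, |u j - v j| := by
  rw [← Finset.sum_sub_distrib]
  refine (Finset.abs_sum_le_sum_abs _ _).trans (Finset.sum_le_sum fun j _ => ?_)
  rw [← sub_mul, abs_mul]
  exact mul_le_of_le_one_right (abs_nonneg _) (hb j)

theorem sum_comp_finSigmaFinEquiv_symm_fst {M : Type*} [AddCommMonoid M] {m : ℕ}
    (c : Fin m → ℕ) (F : Fin m → M) :
    ∑ i : Fin (∑ j, c j), F (finSigmaFinEquiv.symm i).1 = ∑ j, c j • F j := by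
  rw [finSigmaFinEquiv.symm.sum_comp (fun p => F p.1), Fintype.sum_sigma]
  simp

theorem exists_equal_weight_quadrature {K : Type*} [PseudoMetricSpace K] [CompactSpace K]
    [MeasurableSpace K] [OpensMeasurableSpace K] (μ : Measure K) [IsProbabilityMeasure μ]
    {δ η : ℝ} (hδ : 0 < δ) (hη : 0 < η) :
    ∃ (n : ℕ) (_ : 0 < n) (k : Fin n → K), ∀ y : Fin n → K, (∀ i, dist (k i) (y i) < δ) →
      ∀ f : K → ℝ, Continuous f → (∀ x, |f x| ≤ 1) →
        (∀ x x', dist x x' < δ → |f x - f x'| ≤ η) →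
        |(∑ i, f (y i)) / n - ∫ x, f x ∂μ| ≤ 3 * η := by
  obtain ⟨m, q, A, hA, hdisj, hcover, hAq⟩ := exists_measurable_partition_subset_ball (K := K) hδ
  have hw_sum : ∑ j, μ.real (A j) = 1 := by
    rw [← measureReal_iUnion_fintype hdisj hA, hcover, probReal_univ]
  obtain ⟨N, hN⟩ := exists_nat_gt (2 * m / η)
  have hN_pos : 0 < N := by
    have : 0 ≤ 2 * (m : ℝ) / η := by positivity
    exact_mod_cast this.trans_lt hN
  obtain ⟨c, rfl, hc⟩ := exists_nat_sum_eq_sum_abs_sub_le (fun j => measureReal_nonneg) hw_sum N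
  set n := ∑ j, c j
  -- the centre `q j` is repeated `c j` times
  let k : Fin n → K := fun i => q ((finSigmaFinEquiv (n := c)).symm i).1
  refine ⟨n, hN_pos, k, fun y hy f hf hf_abs hf_mod => ?_⟩
  have hn : (0 : ℝ) < n := by exact_mod_cast hN_pos
  have h_move : |∑ i, f (y i) - ∑ i, f (k i)| ≤ n * η := by
    rw [← Finset.sum_sub_distrib]
    refine (Finset.abs_sum_le_sum_abs _ _).trans ?_
    simpa [n, abs_sub_comm] using Finset.sum_le_sum (s := .univ) fun i _ => hf_mod _ _ (hy i)
  have h_round : |∑ i, f (k i) - n * ∑ j, μ.real (A j) * f (q j)| ≤ n * η := by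
    have h_group : ∑ i, f (k i) = ∑ j, (c j : ℝ) * f (q j) := by
      simpa only [nsmul_eq_mul] using sum_comp_finSigmaFinEquiv_symm_fst c (fun j => f (q j))
    rw [h_group, Finset.mul_sum]
    simp_rw [← mul_assoc]
    calc _ ≤ ∑ j, |(c j : ℝ) - n * μ.real (A j)| := abs_sum_mul_sub_sum_mul_le fun j => hf_abs _
      _ ≤ 2 * m := by simpa using hc
      _ ≤ n * η := by rw [div_lt_iff₀ hη] at hN; exact hN.le
  have h_riemann : |n * ∑ j, μ.real (A j) * f (q j) - n * ∫ x, f x ∂μ| ≤ n * η := by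
    rw [← mul_sub, abs_mul, abs_of_pos hn, abs_sub_comm]
    refine mul_le_mul_of_nonneg_left ?_ hn.le
    simpa using abs_integral_sub_sum_measureReal_mul_le (μ := μ) hA hdisj hcover
      (hf.integrable_of_hasCompactSupport (HasCompactSupport.of_compactSpace f))
      fun j x hx => hf_mod _ _ (hAq j hx)
  rw [div_sub' hn.ne', abs_div, abs_of_pos hn, div_le_iff₀ hn]
  linarith [abs_sub_le (∑ i, f (y i)) (∑ i, f (k i)) (n * ∫ x, f x ∂μ),
    abs_sub_le (∑ i, f (k i)) (n * ∑ j, μ.real (A j) * f (q j)) (n * ∫ x, f x ∂μ)]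

theorem Av_smul_set {G Ω : Type*} [Group G] [MulAction G Ω] {n : ℕ} (x : Fin n → Ω) (g : G)
    (S : Set Ω) : Av x (g • S) = (∑ i, S.indicator 1 (g⁻¹ • x i)) / n := by
  simp [Av, indicator_apply, mem_smul_set_iff_inv_smul_mem, Finset.sum_boole]

theorem dense_approximation_of_translates_general
    {K : Type*} [Group K] [TopologicalSpace K] [IsTopologicalGroup K]
    [CompactSpace K] [SecondCountableTopology K]
    [MeasurableSpace K] [BorelSpace K]
    (h : Measure K) [h.IsHaarMeasure] [IsProbabilityMeasure h]
    (X : Set K) (hnull : h (frontier X) = 0)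
    (ε : ℝ) (hε : 0 < ε) :
    ∃ (n : ℕ) (_ : 0 < n) (k : Fin n → K),
      ∀ D : Set K, Dense D →
        ∃ d : Fin n → K, (∀ i, d i ∈ D) ∧
          ∀ g : K, |(h (g • X)).toReal - Av d (g • X)| ≤ 3 * ε := by
  have := IsTopologicalGroup.pseudoMetrizableSpace K
  let := TopologicalSpace.pseudoMetrizableSpacePseudoMetric K
  obtain ⟨φ, hφ, hφ_abs, hφX, hφ_int⟩ :=
    exists_continuous_le_indicator_of_null_frontier h hnull (half_pos hε)
  obtain ⟨ψ, hψ, hψ_abs, hψX, hψ_int⟩ :=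
    exists_continuous_indicator_le_of_null_frontier h hnull (half_pos hε)
  obtain ⟨δ₁, hδ₁, hφδ⟩ := Metric.uniformEquicontinuous_iff.1
    (uniformEquicontinuous_comp_inv_mul hφ) (ε / 2) (half_pos hε)
  obtain ⟨δ₂, hδ₂, hψδ⟩ := Metric.uniformEquicontinuous_iff.1
    (uniformEquicontinuous_comp_inv_mul hψ) (ε / 2) (half_pos hε)
  obtain ⟨n, hn, k, hk⟩ := exists_equal_weight_quadrature h (lt_min hδ₁ hδ₂) (half_pos hε)
  refine ⟨n, hn, k, fun D hD => ?_⟩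
  choose d hdD hdk using fun i => hD.exists_dist_lt (k i) (lt_min hδ₁ hδ₂)
  refine ⟨d, hdD, fun g => ?_⟩
  have hφg := hk d hdk (fun x => φ (g⁻¹ * x)) (by fun_prop) (fun x => hφ_abs _)
    fun x x' hxx' => (hφδ x x' (hxx'.trans_le (min_le_left _ _)) g).le
  have hψg := hk d hdk (fun x => ψ (g⁻¹ * x)) (by fun_prop) (fun x => hψ_abs _)
    fun x x' hxx' => (hψδ x x' (hxx'.trans_le (min_le_right _ _)) g).le
  rw [integral_mul_left_eq_self] at hφg hψg
  have hlow : (∑ i, φ (g⁻¹ * d i)) / n ≤ Av d (g • X) := by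
    rw [Av_smul_set]; gcongr with i; exact hφX _
  have hhigh : Av d (g • X) ≤ (∑ i, ψ (g⁻¹ * d i)) / n := by
    rw [Av_smul_set]; gcongr with i; exact hψX _
  rw [measure_smul, ← measureReal_def]
  rw [abs_le] at hφg hψg ⊢
  constructor <;> linarith

/-- In a second countable compact Hausdorff group with Haar probability
measure `h`, if `X` is Borel with null frontier and its translates have finite
VC-dimension, then for every `ε > 0` there are finitely many points `k₁,…,kₙ` such that
for any dense subset `D` one can choose points `d₁,…,dₙ ∈ D` approximating the measure of
every translate `gX` up to `3ε`. -/
theorem dense_approximation_of_translates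
    {K : Type*} [Group K] [TopologicalSpace K] [IsTopologicalGroup K] [T2Space K]
    [CompactSpace K] [SecondCountableTopology K]
    [MeasurableSpace K] [BorelSpace K]
    (h : Measure K) [h.IsHaarMeasure] [IsProbabilityMeasure h]
    (X : Set K) (hX : MeasurableSet X) (hnull : h (frontier X) = 0)
    (hVC : FiniteVC {S : Set K | ∃ g : K, S = g • X})
    (ε : ℝ) (hε : 0 < ε) :
    ∃ (n : ℕ) (_ : 0 < n) (k : Fin n → K),
      ∀ D : Set K, Dense D →
        ∃ d : Fin n → K, (∀ i, d i ∈ D) ∧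
          ∀ g : K, |(h (g • X)).toReal - Av d (g • X)| ≤ 3 * ε :=
  dense_approximation_of_translates_general h X hnull ε hε
end
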